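/- arXiv:1902.03851 — 2 statements merged into one kernel-verified Lean document; each statement's English description precedes it below -/
import Mathlib

section
/- Let n be a positive integer. Then in ℤ[q], the polynomial Φ_n(q)² divides Σ_{i=0}^{n-1} Σ_{j=0}^{n-1} q^{j²+i+j} · ([i+j choose i]_q)² − Σ_{m=0}^{n-1} q^m · [2m choose m]_q. -/
/-
By the q-Vandermonde identity and the symmetry of `B`,
`q ^ m * [2m, m] = ∑_{i + j = m} q ^ (j ^ 2 + i + j) * [i + j, i] ^ 2`, so the difference is the sum
of the terms of the square `i, j < n` with `i + j ≥ n`. For each of these `Φ_n` divides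
`(q; q)_{i+j}` but, being prime and dividing no `1 - q ^ k` with `0 < k < n`, neither `(q; q)_i` nor
`(q; q)_j`; hence `Φ_n ∣ [i + j, i]` and `Φ_n ^ 2` divides the term.
-/

open Polynomial

/-- The q-shifted factorial `(q; q)_n = (1-q)(1-q^2)⋯(1-q^n)` in `ℤ[q]`. -/
noncomputable def qPoch (n : ℕ) : Polynomial ℤ := ∏ i ∈ Finset.range n, (1 - X ^ (i + 1))

open Finset

theorem sum_range_sum_range_sub_sum_antidiagonal {M : Type*} [AddCommGroup M] (n : ℕ)
    (f : ℕ → ℕ → M) :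
    ∑ i ∈ range n, ∑ j ∈ range n, f i j - ∑ m ∈ range n, ∑ i ∈ range (m + 1), f i (m - i) =
      ∑ p ∈ range n ×ˢ range n with n ≤ p.1 + p.2, f p.1 p.2 := by
  have htriangle : ∑ m ∈ range n, ∑ i ∈ range (m + 1), f i (m - i) =
      ∑ p ∈ range n ×ˢ range n with p.1 + p.2 < n, f p.1 p.2 := by
    rw [← sum_fiberwise_of_maps_to (g := fun p : ℕ × ℕ => p.1 + p.2) (t := range n)
      (fun p hp => by simp only [mem_filter] at hp; exact mem_range.2 hp.2)]
    refine sum_congr rfl fun m hm => ?_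
    rw [← Nat.sum_antidiagonal_eq_sum_range_succ f]
    refine sum_congr ?_ fun _ _ => rfl
    ext ⟨i, j⟩
    simp only [mem_filter, mem_product, mem_range, HasAntidiagonal.mem_antidiagonal] at hm ⊢
    omega
  rw [htriangle, ← sum_product', ← sum_filter_add_sum_filter_not _ (fun p => p.1 + p.2 < n)]
  simp [not_lt]

theorem one_sub_X_pow_ne_zero {k : ℕ} (hk : 0 < k) : (1 - X ^ k : ℤ[X]) ≠ 0 := by
  rw [← neg_ne_zero, neg_sub, ← C_1]
  exact X_pow_sub_C_ne_zero hk 1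

theorem qPoch_zero : qPoch 0 = 1 := prod_range_zero _

theorem qPoch_succ (n : ℕ) : qPoch (n + 1) = qPoch n * (1 - X ^ (n + 1)) := prod_range_succ _ _

theorem qPoch_ne_zero (n : ℕ) : qPoch n ≠ 0 :=
  prod_ne_zero_iff.2 fun i _ => one_sub_X_pow_ne_zero i.succ_pos

theorem cyclotomic_not_dvd_one_sub_X_pow {n k : ℕ} (hk : 0 < k) (hkn : k < n) :
    ¬ cyclotomic n ℤ ∣ 1 - X ^ k := by
  intro hdvd
  set μ := Complex.exp (2 * Real.pi * Complex.I / n)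
  have hμ : IsPrimitiveRoot μ n := Complex.isPrimitiveRoot_exp n (hk.trans hkn).ne'
  have hroot : aeval μ (cyclotomic n ℤ) = 0 := by
    simpa [aeval_def, eval₂_eq_eval_map] using hμ.isRoot_cyclotomic (hk.trans hkn)
  have hμk := map_dvd (aeval μ) hdvd
  rw [hroot, zero_dvd_iff] at hμk
  simp only [map_sub, map_one, map_pow, aeval_X, sub_eq_zero] at hμk
  exact Nat.not_dvd_of_pos_of_lt hk hkn ((hμ.pow_eq_one_iff_dvd k).1 hμk.symm)

theorem cyclotomic_not_dvd_qPoch {n t : ℕ} (ht : t < n) : ¬ cyclotomic n ℤ ∣ qPoch t := by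
  intro hdvd
  obtain ⟨i, hi, hdvd_i⟩ :=
    (cyclotomic.irreducible (t.zero_le.trans_lt ht)).prime.exists_mem_finset_dvd hdvd
  exact cyclotomic_not_dvd_one_sub_X_pow i.succ_pos (by grind) hdvd_i

theorem cyclotomic_dvd_qPoch {n m : ℕ} (hn : 0 < n) (hnm : n ≤ m) :
    cyclotomic n ℤ ∣ qPoch m := by
  have hfactor : (1 - X ^ n : ℤ[X]) ∣ qPoch m := by
    have := dvd_prod_of_mem (fun i => (1 - X ^ (i + 1) : ℤ[X]))
      (mem_range.2 (by omega : n - 1 < m))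
    rwa [Nat.sub_add_cancel hn] at this
  exact (dvd_sub_comm.1 (cyclotomic.dvd_X_pow_sub_one n ℤ)).trans hfactor

section GaussianBinomial

variable {B : ℕ → ℕ → ℤ[X]}
  (hB : ∀ m k : ℕ, k ≤ m → B m k * (qPoch k * qPoch (m - k)) = qPoch m)
  (hB' : ∀ m k : ℕ, m < k → B m k = 0)

include hB

theorem eq_B_of_mul_eq {m k : ℕ} (h : k ≤ m) {C : ℤ[X]}
    (hC : C * (qPoch k * qPoch (m - k)) = qPoch m) : C = B m k :=
  mul_right_cancel₀ (mul_ne_zero (qPoch_ne_zero k) (qPoch_ne_zero (m - k)))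
    (hC.trans (hB m k h).symm)

theorem B_self (m : ℕ) : B m m = 1 :=
  (eq_B_of_mul_eq hB le_rfl (by simp [qPoch_zero])).symm

theorem B_zero_right (m : ℕ) : B m 0 = 1 :=
  (eq_B_of_mul_eq hB m.zero_le (by simp [qPoch_zero])).symm

theorem B_symm {m k : ℕ} (h : k ≤ m) : B m (m - k) = B m k := by
  refine (eq_B_of_mul_eq hB (Nat.sub_le m k) ?_).symm
  rw [Nat.sub_sub_self h, mul_comm (qPoch (m - k))]
  exact hB m k h

theorem cyclotomic_dvd_B {n i j : ℕ} (hi : i < n) (hj : j < n) (hij : n ≤ i + j) :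
    cyclotomic n ℤ ∣ B (i + j) i := by
  have hp := (cyclotomic.irreducible (i.zero_le.trans_lt hi)).prime
  have hdvd := cyclotomic_dvd_qPoch (i.zero_le.trans_lt hi) hij
  rw [← hB (i + j) i (Nat.le_add_right i j), Nat.add_sub_cancel_left] at hdvd
  rcases hp.dvd_mul.1 hdvd with h | h
  · exact h
  · rcases hp.dvd_mul.1 h with h | h
    · exact absurd h (cyclotomic_not_dvd_qPoch hi)
    · exact absurd h (cyclotomic_not_dvd_qPoch hj)

include hB'

theorem B_succ_succ (m t : ℕ) : B (m + 1) (t + 1) = B m t + X ^ (t + 1) * B m (t + 1) := by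
  rcases lt_trichotomy t m with h | rfl | h
  · obtain ⟨a, rfl⟩ : ∃ a, m = t + (a + 1) := ⟨m - t - 1, by omega⟩
    have h1 := hB (t + (a + 1)) t (by omega)
    have h2 := hB (t + (a + 1)) (t + 1) (by omega)
    refine (eq_B_of_mul_eq hB (by omega) ?_).symm
    rw [show t + (a + 1) - t = a + 1 by omega] at h1
    rw [show t + (a + 1) - (t + 1) = a by omega] at h2
    rw [show t + (a + 1) + 1 - (t + 1) = a + 1 by omega]
    rw [qPoch_succ t, qPoch_succ a] at *
    rw [qPoch_succ (t + (a + 1))]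
    linear_combination (1 - (X : ℤ[X]) ^ (t + 1)) * h1
      + (X : ℤ[X]) ^ (t + 1) * (1 - (X : ℤ[X]) ^ (a + 1)) * h2
  · rw [B_self hB, B_self hB, hB' t (t + 1) t.lt_succ_self, mul_zero, add_zero]
  · rw [hB' _ _ (by omega : m + 1 < t + 1), hB' m t h, hB' m (t + 1) (by omega), mul_zero,
      add_zero]

theorem B_succ_succ' (m t : ℕ) : B (m + 1) (t + 1) = X ^ (m - t) * B m t + B m (t + 1) := by
  rcases lt_trichotomy t m with h | rfl | h
  · obtain ⟨a, rfl⟩ : ∃ a, m = t + a + 1 := ⟨m - t - 1, by omega⟩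
    rw [← B_symm hB (by omega : t + 1 ≤ t + a + 1 + 1), ← B_symm hB (by omega : t ≤ t + a + 1),
      ← B_symm hB (by omega : t + 1 ≤ t + a + 1), show t + a + 1 + 1 - (t + 1) = a + 1 by omega,
      show t + a + 1 - t = a + 1 by omega, show t + a + 1 - (t + 1) = a by omega,
      B_succ_succ hB hB', add_comm]
  · rw [B_self hB, B_self hB, hB' t (t + 1) t.lt_succ_self, Nat.sub_self, pow_zero, one_mul,
      add_zero]
  · rw [hB' _ _ (by omega : m + 1 < t + 1), hB' m t h, hB' m (t + 1) (by omega), mul_zero,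
      add_zero]

/- Expanding `B (a + 1 + b) k = B (a + (b + 1)) k` with the two Pascal rules gives the same
right-hand side, which is the induction step of the q-Vandermonde identity `B_add`. -/
theorem sum_B_succ_left (a b k : ℕ) :
    ∑ j ∈ range (k + 1), X ^ ((a + 1 - j) * (k - j)) * B (a + 1) j * B b (k - j) =
      ∑ i ∈ range k, X ^ ((a - i) * (k - i)) * B a i * B b (k - i - 1) +
        ∑ j ∈ range (k + 1), X ^ ((a - j) * (k - j) + (k - j)) * B a j * B b (k - j) := by
  have hterm : ∀ i ∈ range k,
      X ^ ((a + 1 - (i + 1)) * (k - (i + 1))) * B (a + 1) (i + 1) * B b (k - (i + 1)) =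
        X ^ ((a - i) * (k - i)) * B a i * B b (k - i - 1) +
          X ^ ((a - (i + 1)) * (k - (i + 1)) + (k - (i + 1))) * B a (i + 1) *
            B b (k - (i + 1)) := by
    intro i hi
    obtain ⟨c, hc⟩ : ∃ c, k - i = c + 1 := ⟨k - i - 1, by grind⟩
    rw [B_succ_succ' hB hB', show a + 1 - (i + 1) = a - i by omega,
      show k - (i + 1) = c by omega, hc, Nat.add_sub_cancel]
    rcases lt_or_ge i a with hia | hia
    · obtain ⟨d, hd⟩ : ∃ d, a - i = d + 1 := ⟨a - i - 1, by omega⟩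
      rw [show a - (i + 1) = d by omega, hd]
      ring
    · rw [hB' a (i + 1) (by omega), show a - i = 0 by omega]
      ring
  rw [sum_range_succ', sum_congr rfl hterm, sum_add_distrib, sum_range_succ' _ k,
    B_zero_right hB, B_zero_right hB]
  simp only [Nat.sub_zero, add_mul, one_mul, add_assoc]

theorem sum_B_succ_right (a b k : ℕ) :
    ∑ j ∈ range (k + 1), X ^ ((a - j) * (k - j)) * B a j * B (b + 1) (k - j) =
      ∑ i ∈ range k, X ^ ((a - i) * (k - i)) * B a i * B b (k - i - 1) +
        ∑ j ∈ range (k + 1), X ^ ((a - j) * (k - j) + (k - j)) * B a j * B b (k - j) := by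
  have hterm : ∀ j ∈ range k,
      X ^ ((a - j) * (k - j)) * B a j * B (b + 1) (k - j) =
        X ^ ((a - j) * (k - j)) * B a j * B b (k - j - 1) +
          X ^ ((a - j) * (k - j) + (k - j)) * B a j * B b (k - j) := by
    intro j hj
    obtain ⟨c, hc⟩ : ∃ c, k - j = c + 1 := ⟨k - j - 1, by grind⟩
    rw [hc, B_succ_succ hB hB', Nat.add_sub_cancel, pow_add]
    ring
  rw [sum_range_succ, sum_congr rfl hterm, sum_add_distrib, sum_range_succ _ k, Nat.sub_self,
    B_zero_right hB, B_zero_right hB]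
  simp only [mul_zero, zero_add, add_assoc]

theorem B_add (a b k : ℕ) :
    B (a + b) k = ∑ j ∈ range (k + 1), X ^ ((a - j) * (k - j)) * B a j * B b (k - j) := by
  induction a generalizing b with
  | zero =>
    rw [zero_add, sum_eq_single_of_mem 0 (mem_range.2 k.succ_pos)
      fun j _ hj => by rw [hB' 0 j (Nat.pos_of_ne_zero hj), mul_zero, zero_mul]]
    simp [B_zero_right hB]
  | succ a ih =>
    rw [show a + 1 + b = a + (b + 1) by omega, ih, sum_B_succ_left hB hB', sum_B_succ_right hB hB']

theorem B_two_mul_self (m : ℕ) :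
    B (2 * m) m = ∑ j ∈ range (m + 1), X ^ ((m - j) ^ 2) * B m j ^ 2 := by
  rw [two_mul, B_add hB hB']
  refine sum_congr rfl fun j hj => ?_
  rw [B_symm hB (Nat.lt_succ_iff.1 (mem_range.1 hj))]
  ring

end GaussianBinomial

theorem stmt_13_general (n : ℕ) (B : ℕ → ℕ → Polynomial ℤ)
    (hB : ∀ m k : ℕ, k ≤ m → B m k * (qPoch k * qPoch (m - k)) = qPoch m)
    (hB' : ∀ m k : ℕ, m < k → B m k = 0) :
    (Polynomial.cyclotomic n ℤ) ^ 2 ∣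
      (∑ i ∈ Finset.range n, ∑ j ∈ Finset.range n,
          X ^ (j ^ 2 + i + j) * (B (i + j) i) ^ 2) -
        ∑ m ∈ Finset.range n, X ^ m * B (2 * m) m := by
  have hcentral : ∀ m, X ^ m * B (2 * m) m =
      ∑ i ∈ range (m + 1), X ^ ((m - i) ^ 2 + i + (m - i)) * B (i + (m - i)) i ^ 2 := by
    intro m
    rw [B_two_mul_self hB hB', mul_sum]
    refine sum_congr rfl fun i hi => ?_
    rw [add_assoc, Nat.add_sub_cancel' (Nat.lt_succ_iff.1 (mem_range.1 hi))]
    ring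
  rw [sum_congr rfl fun m _ => hcentral m, sum_range_sum_range_sub_sum_antidiagonal]
  refine dvd_sum fun p hp => ?_
  simp only [mem_filter, mem_product, mem_range] at hp
  exact dvd_mul_of_dvd_right (pow_dvd_pow_of_dvd (cyclotomic_dvd_B hB hp.1.1 hp.1.2 hp.2) 2) _

theorem stmt_13 (n : ℕ) (hn : 0 < n) (B : ℕ → ℕ → Polynomial ℤ)
    (hB : ∀ m k : ℕ, k ≤ m → B m k * (qPoch k * qPoch (m - k)) = qPoch m)
    (hB' : ∀ m k : ℕ, m < k → B m k = 0) :
    (Polynomial.cyclotomic n ℤ) ^ 2 ∣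
      (∑ i ∈ Finset.range n, ∑ j ∈ Finset.range n,
          X ^ (j ^ 2 + i + j) * (B (i + j) i) ^ 2) -
        ∑ m ∈ Finset.range n, X ^ m * B (2 * m) m :=
  stmt_13_general n B hB hB'
end

section
/- Let p ≥ 5 be a prime. Then Σ_{k=0}^{p-1} binomial(2k, k) ≡ χ(p) (mod p²), where the congruence is between integers. -/
/-!
Since `((1 + x)² - x) · ∑_{k<n} (1 + x)^{2k} x^{n-1-k} = (1 + x)^{2n} - x^n` and
`(1 + x)² - x = 1 + x + x²`, the sum `∑_{k<n} C(2k, k)` is the coefficient of `x^{n-1}` in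
`(1 + x)^{2n} / (1 + x + x²)`, that is `∑_{j<n} C(2n, j) χ(n - j)`, because
`1 / (1 + x + x²) = ∑ χ(m + 1) x^m`. Modulo `p²`, `((1 + x)^p - 1)²` vanishes in degrees below `p`,
so `C(2p, j) ≡ 2 C(p, j) - [j = 0]` there. The remaining sum `∑_j C(p, j) χ(p - j)` is computed
exactly by Pascal's rule, since `χ` sums to zero over any three consecutive integers.
-/

/-- The Legendre symbol `(p/3)`. -/
def chi (n : ℕ) : ℤ := if n % 3 = 1 then 1 else if n % 3 = 2 then -1 else 0

open Finset Polynomial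

theorem chi_add_chi_add_one_add_chi_add_two (n : ℕ) : chi n + chi (n + 1) + chi (n + 2) = 0 := by
  simp only [chi]; split_ifs <;> omega

theorem chi_two_mul (n : ℕ) : chi (2 * n) = -chi n := by
  simp only [chi]; split_ifs <;> omega

theorem sum_range_choose_mul_chi_add (n r : ℕ) :
    ∑ i ∈ range (n + 1), (n.choose i : ℤ) * chi (i + r) = (-1) ^ n * chi (2 * n + r) := by
  induction n generalizing r with
  | zero => simp
  | succ n ih =>
    have hpascal := sum_choose_succ_mul (fun i _ => chi (i + r)) n
    simp only [add_right_comm _ 1 r, add_assoc _ r 1] at hpascal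
    rw [hpascal, ih, ih, pow_succ, ← add_assoc, show 2 * (n + 1) + r = 2 * n + r + 2 by ring]
    linear_combination (-1) ^ n * chi_add_chi_add_one_add_chi_add_two (2 * n + r)

theorem sum_antidiagonal_choose_succ_mul_chi (n : ℕ) :
    ∑ ij ∈ antidiagonal n, ((n + 1).choose ij.1 : ℤ) * chi (ij.2 + 1) = (-1) ^ n * chi (n + 1) := by
  have h := sum_range_choose_mul_chi_add (n + 1) 0
  rw [sum_range_succ'] at h
  simp only [add_zero, chi_two_mul, show chi 0 = 0 from rfl, mul_zero] at h
  rw [sum_congr rfl fun ij hij => by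
      rw [Nat.choose_symm_of_eq_add
        (by have := mem_antidiagonal.1 hij; omega : n + 1 = ij.1 + (ij.2 + 1))],
    ← Nat.sum_antidiagonal_swap]
  simp only [Prod.snd_swap]
  rw [Nat.sum_antidiagonal_eq_sum_range_succ
    (fun i _ => ((n + 1).choose (i + 1) : ℤ) * chi (i + 1))]
  linear_combination h

noncomputable def chiSeries : PowerSeries ℤ := PowerSeries.mk fun m => chi (m + 1)

theorem chiSeries_mul : chiSeries * (1 + PowerSeries.X + PowerSeries.X ^ 2) = 1 := by
  ext m
  rw [mul_add, mul_add, mul_one, map_add, map_add, PowerSeries.coeff_mul_X_pow',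
    ← pow_one PowerSeries.X, PowerSeries.coeff_mul_X_pow', PowerSeries.coeff_one]
  rcases m with _ | _ | m
  · simp [chiSeries, chi]
  · simp [chiSeries, chi]
  · rw [if_pos (by omega), if_pos (by omega), if_neg (by omega), Nat.add_sub_cancel,
      show m + 1 + 1 - 2 = m by omega]
    simp only [chiSeries, PowerSeries.coeff_mk]
    linear_combination chi_add_chi_add_one_add_chi_add_two (m + 1)

theorem coeff_eq_sum_antidiagonal_chi_of_mul_eq {F P : ℤ[X]} (h : F * (1 + X + X ^ 2) = P)
    (n : ℕ) : F.coeff n = ∑ ij ∈ antidiagonal n, P.coeff ij.1 * chi (ij.2 + 1) := by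
  have hF : (F : PowerSeries ℤ) = P * chiSeries := by
    rw [← h, Polynomial.coe_mul, mul_assoc, mul_comm _ chiSeries]
    push_cast
    rw [chiSeries_mul, mul_one]
  rw [← Polynomial.coeff_coe, hF, PowerSeries.coeff_mul]
  simp [chiSeries]

theorem sum_range_choose_two_mul_eq_sum_antidiagonal_chi (n : ℕ) :
    ∑ k ∈ range (n + 1), ((2 * k).choose k : ℤ)
      = ∑ ij ∈ antidiagonal n, ((2 * (n + 1)).choose ij.1 : ℤ) * chi (ij.2 + 1) := by
  set F : ℤ[X] := ∑ i ∈ range (n + 1), ((1 + X) ^ 2) ^ i * X ^ (n - i) with hF_def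
  have hF : F * (1 + X + X ^ 2) = (1 + X) ^ (2 * (n + 1)) - X ^ (n + 1) := by
    have hgeom := geom_sum₂_mul ((1 + X : ℤ[X]) ^ 2) X (n + 1)
    simp only [Nat.add_sub_cancel] at hgeom
    rw [pow_mul, ← hgeom, hF_def]
    ring
  have hcoeff : F.coeff n = ∑ k ∈ range (n + 1), ((2 * k).choose k : ℤ) := by
    rw [hF_def, finsetSum_coeff]
    refine sum_congr rfl fun k hk => ?_
    have hkn : k ≤ n := Nat.lt_succ_iff.1 (mem_range.1 hk)
    rw [← pow_mul, coeff_mul_X_pow', if_pos (Nat.sub_le n k), Nat.sub_sub_self hkn,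
      coeff_one_add_X_pow]
  rw [← hcoeff, coeff_eq_sum_antidiagonal_chi_of_mul_eq hF]
  refine sum_congr rfl fun ij hij => ?_
  have := mem_antidiagonal.1 hij
  rw [coeff_sub, coeff_one_add_X_pow, coeff_X_pow, if_neg (by omega), sub_zero]

theorem Nat.Prime.choose_two_mul_modEq {p i : ℕ} (hp : p.Prime) (hi : i < p) :
    ((2 * p).choose i : ℤ) ≡ 2 * p.choose i - if i = 0 then 1 else 0 [ZMOD (p : ℤ) ^ 2] := by
  have hsq : (((1 + X : ℤ[X]) ^ p - 1) ^ 2).coeff i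
      = ((2 * p).choose i : ℤ) - (2 * p.choose i - if i = 0 then 1 else 0) := by
    rw [show ((1 + X : ℤ[X]) ^ p - 1) ^ 2 = (1 + X) ^ (2 * p) - 2 * (1 + X) ^ p + 1 by ring]
    simp only [coeff_add, coeff_sub, coeff_ofNat_mul, coeff_one_add_X_pow, coeff_one]
    ring
  have hdvd : ∀ a < p, (p : ℤ) ∣ (((1 + X : ℤ[X]) ^ p) - 1).coeff a := by
    intro a ha
    rcases Nat.eq_zero_or_pos a with rfl | ha0
    · simp [coeff_one_add_X_pow]
    · rw [coeff_sub, coeff_one_add_X_pow, coeff_one, if_neg ha0.ne', sub_zero]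
      exact_mod_cast hp.dvd_choose_self ha0.ne' ha
  refine (Int.modEq_iff_dvd.2 ?_).symm
  rw [← hsq, sq (_ - _), coeff_mul, sq]
  refine dvd_sum fun ij hij => mul_dvd_mul (hdvd _ ?_) (hdvd _ ?_) <;>
    · have := mem_antidiagonal.1 hij; omega

theorem stmt_16 (p : ℕ) (hp : p.Prime) (hp5 : 5 ≤ p) :
    (∑ k ∈ Finset.range p, ((2 * k).choose k : ℤ)) ≡ chi p [ZMOD ((p : ℤ) ^ 2)] := by
  have heven : Even (p - 1) := hp.even_sub_one (by omega)
  obtain ⟨n, rfl⟩ : ∃ n, p = n + 1 := ⟨p - 1, by omega⟩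
  calc ∑ k ∈ range (n + 1), ((2 * k).choose k : ℤ)
      = ∑ ij ∈ antidiagonal n, ((2 * (n + 1)).choose ij.1 : ℤ) * chi (ij.2 + 1) :=
        sum_range_choose_two_mul_eq_sum_antidiagonal_chi n
    _ ≡ ∑ ij ∈ antidiagonal n,
          (2 * (n + 1).choose ij.1 - if ij.1 = 0 then 1 else 0) * chi (ij.2 + 1)
        [ZMOD ((n + 1 : ℕ) : ℤ) ^ 2] :=
        Int.ModEq.sum fun ij hij =>
          (hp.choose_two_mul_modEq (by have := mem_antidiagonal.1 hij; omega)).mul_right _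
    _ = 2 * ∑ ij ∈ antidiagonal n, ((n + 1).choose ij.1 : ℤ) * chi (ij.2 + 1) - chi (n + 1) := by
        rw [sum_congr rfl fun ij _ => by rw [sub_mul, mul_assoc], sum_sub_distrib, ← mul_sum]
        congr 1
        rw [Nat.sum_antidiagonal_eq_sum_range_succ_mk, sum_range_succ']
        simp
    _ = chi (n + 1) := by
        rw [sum_antidiagonal_choose_succ_mul_chi, (by simpa using heven : Even n).neg_one_pow]
        ring
end
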